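/- Let γ ∈ (0, √2) and let α be real with α < −1/γ. Then the integral ∫_{𝔻²} |w₁|^{−γα−3} |w₂|^{−γα−1} |w₁−w₂|^{−γ²} |dw₁|² |dw₂|² is finite; in particular the integral J₂(α) defining the Dotsenko–Fateev type integral with singular weights 1/(w₁·conj(w₁)²·conj(w₂)) converges absolutely on the half-plane {Re α < −1/γ}. -/

import Mathlib

/-!
On `𝔻²` the factor `|w₂|^(-γα-1)` is at most `1`, so the integrand is dominated by
`|w₁|^(-γα-3) |w₂ - w₁|^(-γ²)`. After the shear `(w₁, w₂) ↦ (w₁, w₂ - w₁)` this is a product of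
two planar weights `|z|^s` with `s > -2`, each integrable near `0`. The weights of `J₂(α)` have
modulus bounded by the same integrand with `α` replaced by `Re α`.
-/

open MeasureTheory Set

noncomputable def unitDisc : Set ℂ := {w : ℂ | ‖w‖ < 1}

noncomputable def J2integrand (γ : ℝ) (α : ℂ) (p : ℂ × ℂ) : ℂ :=
  ((‖p.1‖ : ℂ) ^ (-((γ : ℂ) * α))) *
    ((‖p.2‖ : ℂ) ^ (-((γ : ℂ) * α))) *
    (((‖p.1 - p.2‖) ^ (-(γ ^ 2)) : ℝ) : ℂ) *
    (((starRingEnd ℂ) p.2 - (starRingEnd ℂ) p.1) / (p.2 - p.1)) *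
    (1 / (p.1 * ((starRingEnd ℂ) p.1) ^ 2 * (starRingEnd ℂ) p.2))

theorem MeasureTheory.IntegrableOn.mul_comp_sub {G R : Type*} [AddGroup G] [MeasurableSpace G]
    [MeasurableAdd₂ G] [MeasurableNeg G] [NormedRing R] {μ ν : Measure G} [SFinite μ] [SFinite ν]
    [ν.IsAddRightInvariant] {f g : G → R} {s t : Set G}
    (hf : IntegrableOn f s μ) (hg : IntegrableOn g t ν) :
    IntegrableOn (fun p : G × G => f p.1 * g (p.2 - p.1)) {p | p.1 ∈ s ∧ p.2 - p.1 ∈ t}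
      (μ.prod ν) := by
  refine ((measurePreserving_prod_sub μ ν).integrableOn_comp_preimage
    (MeasurableEquiv.shearSubRight G).measurableEmbedding (f := fun q => f q.1 * g q.2)
    (s := s ×ˢ t)).2 ?_
  rw [IntegrableOn, ← Measure.prod_restrict]
  exact hf.mul_prod hg

open Metric

lemma integrableOn_ball_norm_rpow {s R : ℝ} (hs : -2 < s) :
    IntegrableOn (fun z : ℂ => ‖z‖ ^ s) (ball 0 R) volume :=
  integrableOn_ball_of_norm_le_rpow (C := 1) (by simp) (by simpa [neg_lt] using hs)
    (ae_of_all _ fun z => by simp [abs_of_nonneg (Real.rpow_nonneg (norm_nonneg z) s)])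
    (by fun_prop : Measurable fun z : ℂ => ‖z‖ ^ s).aestronglyMeasurable

lemma unitDisc_eq_ball : unitDisc = ball 0 1 := by
  ext z; simp [unitDisc]

lemma integrableOn_unitDisc_prod_rpow {a b c : ℝ} (ha : -2 < a) (hb : 0 ≤ b) (hc : -2 < c) :
    IntegrableOn (fun p : ℂ × ℂ => ‖p.1‖ ^ a * ‖p.2‖ ^ b * ‖p.1 - p.2‖ ^ c)
      (unitDisc ×ˢ unitDisc) volume := by
  have hdom : IntegrableOn (fun p : ℂ × ℂ => ‖p.1‖ ^ a * ‖p.2 - p.1‖ ^ c)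
      {p | p.1 ∈ ball 0 1 ∧ p.2 - p.1 ∈ ball 0 2} volume := by
    rw [Measure.volume_eq_prod]
    exact (integrableOn_ball_norm_rpow ha).mul_comp_sub (integrableOn_ball_norm_rpow hc)
  rw [unitDisc_eq_ball]
  have hsub : ball 0 1 ×ˢ ball 0 1 ⊆ {p : ℂ × ℂ | p.1 ∈ ball 0 1 ∧ p.2 - p.1 ∈ ball 0 2} := by
    rintro ⟨z, w⟩ ⟨hz, hw⟩
    rw [mem_ball_zero_iff] at hz hw
    exact ⟨mem_ball_zero_iff.2 hz, mem_ball_zero_iff.2 ((norm_sub_le w z).trans_lt (by linarith))⟩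
  refine (hdom.mono_set hsub).mono' (by fun_prop : Measurable _).aestronglyMeasurable ?_
  rw [ae_restrict_iff' (measurableSet_ball.prod measurableSet_ball)]
  refine ae_of_all _ fun ⟨z, w⟩ ⟨_, hw⟩ => ?_
  rw [mem_ball_zero_iff] at hw
  have hw1 : ‖w‖ ^ b ≤ 1 := Real.rpow_le_one (norm_nonneg w) hw.le hb
  rw [Real.norm_of_nonneg (by positivity), norm_sub_rev w z]
  calc ‖z‖ ^ a * ‖w‖ ^ b * ‖z - w‖ ^ c ≤ ‖z‖ ^ a * 1 * ‖z - w‖ ^ c := by gcongr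
    _ = ‖z‖ ^ a * ‖z - w‖ ^ c := by rw [mul_one]

lemma norm_conj_div_self_le_one (z : ℂ) : ‖starRingEnd ℂ z / z‖ ≤ 1 := by
  rcases eq_or_ne z 0 with rfl | hz
  · simp
  · rw [norm_div, Complex.norm_conj, div_self (norm_ne_zero_iff.mpr hz)]

lemma norm_J2integrand_le (γ : ℝ) (β : ℂ) (p : ℂ × ℂ) :
    ‖J2integrand γ β p‖ ≤
      ‖p.1‖ ^ (-(γ * β.re) - 3) * ‖p.2‖ ^ (-(γ * β.re) - 1) * ‖p.1 - p.2‖ ^ (-(γ ^ 2)) := by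
  obtain ⟨z, w⟩ := p
  rcases eq_or_ne z 0 with rfl | hz
  · rw [show J2integrand γ β (0, w) = 0 by simp [J2integrand], norm_zero]
    positivity
  rcases eq_or_ne w 0 with rfl | hw
  · rw [show J2integrand γ β (z, 0) = 0 by simp [J2integrand], norm_zero]
    positivity
  have hz' := norm_pos_iff.mpr hz
  have hw' := norm_pos_iff.mpr hw
  have hnorm : ‖J2integrand γ β (z, w)‖ =
      ‖z‖ ^ (-(γ * β.re) - 3) * ‖w‖ ^ (-(γ * β.re) - 1) * ‖z - w‖ ^ (-(γ ^ 2)) *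
        ‖starRingEnd ℂ (w - z) / (w - z)‖ := by
    simp only [J2integrand, norm_mul, norm_div, norm_pow, Complex.norm_conj, map_sub,
      Complex.norm_cpow_eq_rpow_re_of_pos hz', Complex.norm_cpow_eq_rpow_re_of_pos hw',
      Complex.norm_real, Real.norm_of_nonneg (Real.rpow_nonneg (norm_nonneg _) _),
      Real.rpow_sub hz', Real.rpow_sub hw', Real.rpow_one, Complex.neg_re, Complex.re_ofReal_mul,
      one_div, norm_inv, Real.rpow_ofNat]
    ring
  rw [hnorm]
  calc _ ≤ ‖z‖ ^ (-(γ * β.re) - 3) * ‖w‖ ^ (-(γ * β.re) - 1) * ‖z - w‖ ^ (-(γ ^ 2)) * 1 := by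
        gcongr; exact norm_conj_div_self_le_one _
    _ = _ := mul_one _

lemma measurable_J2integrand (γ : ℝ) (β : ℂ) : Measurable (J2integrand γ β) := by
  unfold J2integrand
  fun_prop

theorem stmt10 (γ : ℝ) (hγ0 : 0 < γ) (hγ2 : γ < Real.sqrt 2)
    (α : ℝ) (hα : α < -1 / γ) :
    IntegrableOn (fun p : ℂ × ℂ =>
        ‖p.1‖ ^ (-(γ * α) - 3) * ‖p.2‖ ^ (-(γ * α) - 1) *
          ‖p.1 - p.2‖ ^ (-(γ ^ 2)))
      (unitDisc ×ˢ unitDisc) volume ∧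
    ∀ β : ℂ, β.re < -1 / γ →
      IntegrableOn (J2integrand γ β) (unitDisc ×ˢ unitDisc) volume := by
  have hγsq : -2 < -(γ ^ 2) := by
    have := (Real.lt_sqrt hγ0.le).1 hγ2
    linarith
  have hdom : ∀ x : ℝ, x < -1 / γ → IntegrableOn (fun p : ℂ × ℂ =>
      ‖p.1‖ ^ (-(γ * x) - 3) * ‖p.2‖ ^ (-(γ * x) - 1) * ‖p.1 - p.2‖ ^ (-(γ ^ 2)))
      (unitDisc ×ˢ unitDisc) volume := by
    intro x hx
    have hγx : x * γ < -1 := (lt_div_iff₀ hγ0).1 hx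
    exact integrableOn_unitDisc_prod_rpow (by linarith) (by linarith) hγsq
  refine ⟨hdom α hα, fun β hβ => ?_⟩
  exact (hdom β.re hβ).mono' (measurable_J2integrand γ β).aestronglyMeasurable
    (ae_of_all _ (norm_J2integrand_le γ β))
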